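/- arXiv:math-ph/9910016 — 4 statements merged into one kernel-verified Lean document; each statement's English description precedes it below -/
import Mathlib

section
/- A stochastic map Φ on L¹(Ω, Σ, μ) is an isometry for the L¹ norm if and only if it preserves orthogonality of positive elements: whenever x, y ≥ 0 satisfy x·y = 0 a.e. (equivalently ‖x − y‖₁ = ‖x + y‖₁), then ‖Φx − Φy‖₁ = ‖Φx + Φy‖₁. -/
/-!
On the positive cone the `L¹` norm is the integral, so a stochastic map is isometric there.
Writing `z = z⁺ - z⁻` with disjoint parts, orthogonality preservation gives
`‖Φ z‖ = ‖Φ z⁺ + Φ z⁻‖ = ‖Φ |z|‖`, which is `‖|z|‖ = ‖z‖`. Conversely, disjointly supported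
`x, y` satisfy `‖x - y‖ = ‖x + y‖`, and a linear isometry transports this identity.
-/

open MeasureTheory

namespace MeasureTheory

variable {α : Type*} [MeasurableSpace α] {μ : Measure α}

theorem Lp.ae_mul_eq_zero_of_inf_eq_zero {p : ENNReal} {f g : Lp ℝ p μ} (h : f ⊓ g = 0) :
    ∀ᵐ a ∂μ, f a * g a = 0 := by
  filter_upwards [Lp.coeFn_inf f g, h ▸ Lp.coeFn_zero ℝ p μ] with a hinf hzero
  have hmin : min (f a) (g a) = 0 := by simpa [hzero] using hinf.symm
  rcases min_choice (f a) (g a) with hf | hg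
  · rw [← hf, hmin, zero_mul]
  · rw [← hg, hmin, mul_zero]

theorem Lp.norm_sub_eq_norm_add_of_ae_mul_eq_zero {p : ENNReal} {f g : Lp ℝ p μ}
    (h : ∀ᵐ a ∂μ, f a * g a = 0) : ‖f - g‖ = ‖f + g‖ := by
  rw [Lp.norm_def, Lp.norm_def, eLpNorm_congr_norm_ae (f := ⇑(f - g)) (g := ⇑(f + g))]
  filter_upwards [Lp.coeFn_sub f g, Lp.coeFn_add f g, h] with a hsub hadd hfg
  rw [hsub, hadd, Pi.sub_apply, Pi.add_apply]
  rcases mul_eq_zero.1 hfg with hf | hg <;> simp [*]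

theorem L1.norm_eq_integral_of_nonneg {f : Lp ℝ 1 μ} (hf : 0 ≤ f) : ‖f‖ = ∫ a, f a ∂μ := by
  rw [L1.norm_eq_integral_norm]
  refine integral_congr_ae ?_
  filter_upwards [(Lp.coeFn_nonneg f).2 hf] with a ha using Real.norm_of_nonneg ha

end MeasureTheory

theorem stochastic_isometry_iff_orthogonality_preserving_general
    {Ω : Type*} [MeasurableSpace Ω] (μ : Measure Ω)
    (Φ : Lp ℝ 1 μ →ₗ[ℝ] Lp ℝ 1 μ)
    (hpos : ∀ f : Lp ℝ 1 μ, 0 ≤ f → 0 ≤ Φ f)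
    (hint : ∀ f : Lp ℝ 1 μ, ∫ a, (Φ f) a ∂μ = ∫ a, f a ∂μ) :
    (∀ z : Lp ℝ 1 μ, ‖Φ z‖ = ‖z‖) ↔
      (∀ x y : Lp ℝ 1 μ, 0 ≤ x → 0 ≤ y → (∀ᵐ a ∂μ, x a * y a = 0) →
        ‖Φ x - Φ y‖ = ‖Φ x + Φ y‖) := by
  refine ⟨fun hiso x y _ _ hxy => ?_, fun horth z => ?_⟩
  · rw [← map_sub, ← map_add, hiso, hiso]
    exact Lp.norm_sub_eq_norm_add_of_ae_mul_eq_zero hxy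
  · have hdisj := Lp.ae_mul_eq_zero_of_inf_eq_zero (posPart_inf_negPart_eq_zero z)
    calc ‖Φ z‖ = ‖Φ z⁺ - Φ z⁻‖ := by rw [← map_sub, posPart_sub_negPart]
      _ = ‖Φ z⁺ + Φ z⁻‖ := horth _ _ (posPart_nonneg z) (negPart_nonneg z) hdisj
      _ = ‖Φ |z|‖ := by rw [← map_add, posPart_add_negPart]
      _ = ∫ a, (Φ |z|) a ∂μ := L1.norm_eq_integral_of_nonneg (hpos _ (abs_nonneg z))
      _ = ∫ a, |z| a ∂μ := hint |z|
      _ = ‖|z|‖ := (L1.norm_eq_integral_of_nonneg (abs_nonneg z)).symm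
      _ = ‖z‖ := norm_abs_eq_norm z

/-- A stochastic map `Φ` on `L¹(Ω, Σ, μ)` (positive, linear,
integral-preserving) is an isometry for the `L¹` norm if and only if it preserves
orthogonality of positive elements: whenever `x, y ≥ 0` satisfy `x · y = 0` a.e.,
then `‖Φx - Φy‖₁ = ‖Φx + Φy‖₁`. -/
theorem stochastic_isometry_iff_orthogonality_preserving
    {Ω : Type*} [MeasurableSpace Ω] (μ : Measure Ω) [SigmaFinite μ]
    (Φ : Lp ℝ 1 μ →ₗ[ℝ] Lp ℝ 1 μ)
    (hpos : ∀ f : Lp ℝ 1 μ, 0 ≤ f → 0 ≤ Φ f)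
    (hint : ∀ f : Lp ℝ 1 μ, ∫ a, (Φ f) a ∂μ = ∫ a, f a ∂μ) :
    (∀ z : Lp ℝ 1 μ, ‖Φ z‖ = ‖z‖) ↔
      (∀ x y : Lp ℝ 1 μ, 0 ≤ x → 0 ≤ y → (∀ᵐ a ∂μ, x a * y a = 0) →
        ‖Φ x - Φ y‖ = ‖Φ x + Φ y‖) :=
  stochastic_isometry_iff_orthogonality_preserving_general μ Φ hpos hint
end

section
/- Let Φ : L¹(μ) → L¹(μ) be a stochastic map (positive, linear, integral-preserving) which is an L¹-isometry. Then Φ is injective, and its inverse Φ⁻¹ : Φ(L¹(μ)) → L¹(μ) defined on the range is a positive linear map. -/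
open MeasureTheory

/-- Let `Φ : L¹(μ) → L¹(μ)` be a stochastic map (positive, linear,
integral-preserving) which is an `L¹`-isometry. Then `Φ` is injective, and its inverse
defined on the range is a positive linear map: if `Φz ≥ 0` then `z ≥ 0`. -/
theorem stochastic_isometry_injective_positive_inverse
    {Ω : Type*} [MeasurableSpace Ω] (μ : Measure Ω) [SigmaFinite μ]
    (Φ : Lp ℝ 1 μ →ₗ[ℝ] Lp ℝ 1 μ)
    (hpos : ∀ f : Lp ℝ 1 μ, 0 ≤ f → 0 ≤ Φ f)
    (hint : ∀ f : Lp ℝ 1 μ, ∫ a, (Φ f) a ∂μ = ∫ a, f a ∂μ)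
    (hiso : ∀ f : Lp ℝ 1 μ, ‖Φ f‖ = ‖f‖) :
    Function.Injective Φ ∧ ∀ z : Lp ℝ 1 μ, 0 ≤ Φ z → 0 ≤ z := by
  constructor
  · intro f g h
    have : ‖f - g‖ = 0 := by
      rw [← hiso, map_sub, h, sub_self, norm_zero]
    exact sub_eq_zero.mp (norm_eq_zero.mp this)
  · intro z hz
    have hz' : 0 ≤ᵐ[μ] (Φ z : Ω → ℝ) := (Lp.coeFn_nonneg _).mpr hz
    -- ‖Φ z‖ = ∫ Φ z since Φ z ≥ 0
    have h1 : ‖Φ z‖ = ∫ a, (Φ z) a ∂μ := by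
      rw [L1.norm_eq_integral_norm]
      refine integral_congr_ae ?_
      filter_upwards [hz'] with a ha
      simp [Real.norm_eq_abs, abs_of_nonneg ha]
    have h2 : ‖z‖ = ∫ a, ‖(z : Ω → ℝ) a‖ ∂μ := L1.norm_eq_integral_norm z
    have hzi : Integrable (z : Ω → ℝ) μ := L1.integrable_coeFn z
    have h3 : ∫ a, ‖(z : Ω → ℝ) a‖ ∂μ = ∫ a, (z : Ω → ℝ) a ∂μ := by
      rw [← h2, ← hiso z, h1, hint]
    have h4 : ∫ a, (‖(z : Ω → ℝ) a‖ - (z : Ω → ℝ) a) ∂μ = 0 := by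
      rw [integral_sub hzi.norm hzi, h3, sub_self]
    have h5 : (fun a => ‖(z : Ω → ℝ) a‖ - (z : Ω → ℝ) a) =ᵐ[μ] 0 := by
      refine (integral_eq_zero_iff_of_nonneg_ae ?_ (hzi.norm.sub hzi)).mp h4
      filter_upwards with a
      simp [sub_nonneg, Real.norm_eq_abs, le_abs_self]
    refine (Lp.coeFn_nonneg _).mp ?_
    filter_upwards [h5] with a ha
    have : ‖(z : Ω → ℝ) a‖ = (z : Ω → ℝ) a := by
      have := sub_eq_zero.mp ha
      simpa using this
    rw [← this]; exact norm_nonneg _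
end

section
/- With H = H₀ ⊕ H₁ ⊕ ⋯ ⊕ Hₙ, Uₖ : H → Hₖ isometries, Pₖ = Uₖ Uₖ* and P₀ the projection onto H₀, and Φ(z) = Σₖ wₖ Uₖ z Uₖ* (wₖ ≥ 0, Σ wₖ = 1), the map Ψ(z) := Σₖ Uₖ* Pₖ z Pₖ Uₖ + P₀ z P₀ is a stochastic map (positive, trace-preserving) satisfying Ψ(Φ(z)) = z for every self-adjoint trace class z; hence Φ is reversible by a stochastic map. -/
open ContinuousLinearMap
open scoped ComplexInnerProductSpace

/-- The trace of an operator `T` computed along the Hilbert basis `b`: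
`tr T = Σᵢ Re ⟪T bᵢ, bᵢ⟫`. For positive trace class operators this is independent
of the choice of basis. -/
noncomputable def trC {H ι : Type*} [NormedAddCommGroup H] [InnerProductSpace ℂ H]
    (b : HilbertBasis ι ℂ H) (T : H →L[ℂ] H) : ℝ :=
  ∑' i, (⟪T (b i), b i⟫).re

/-- `x` is a positive trace class operator (with trace computed along `b`). -/
def IsTCPos {H ι : Type*} [NormedAddCommGroup H] [InnerProductSpace ℂ H] [CompleteSpace H]
    (b : HilbertBasis ι ℂ H) (x : H →L[ℂ] H) : Prop :=
  x.IsPositive ∧ Summable fun i => (⟪x (b i), b i⟫).re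

/-- `z` is a self-adjoint trace class operator: it has a Jordan decomposition
`z = p - q` into orthogonal positive operators of finite trace. -/
def IsTraceClassSA {H ι : Type*} [NormedAddCommGroup H] [InnerProductSpace ℂ H]
    [CompleteSpace H] (b : HilbertBasis ι ℂ H) (z : H →L[ℂ] H) : Prop :=
  ∃ p q : H →L[ℂ] H, IsTCPos b p ∧ IsTCPos b q ∧ z = p - q ∧ p ∘L q = 0

/-- The trace norm of a self-adjoint trace class operator `z`:
`‖z‖₁ = inf { tr p + tr q | p, q positive, z = p - q }` (the infimum is attained at
the Jordan decomposition). -/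
noncomputable def trNorm {H ι : Type*} [NormedAddCommGroup H] [InnerProductSpace ℂ H]
    [CompleteSpace H] (b : HilbertBasis ι ℂ H) (z : H →L[ℂ] H) : ℝ :=
  sInf {r : ℝ | ∃ p q : H →L[ℂ] H,
    p.IsPositive ∧ q.IsPositive ∧ z = p - q ∧ r = trC b p + trC b q}

/-!
`Ψ` is the map `z ↦ Σₒ Vₒ* z Vₒ` for the finite family `V = (P₀, U₁, …, Uₙ)` (note
`Uₖ* Pₖ = Uₖ*`), and the orthogonal decomposition of `H` is exactly the completeness relation
`Σₒ Vₒ Vₒ* = P₀ + Σₖ Pₖ = 1`. Positivity of `Ψ` is termwise. For the trace, write a positive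
`x` as `S* S`; then `tr Ψ(x) = Σₒ ‖S Vₒ‖²_HS = Σₒ ‖Vₒ* S*‖²_HS = ‖S*‖²_HS = tr x`, using that a
Hilbert–Schmidt sum is unchanged by taking adjoints. All these sums are taken in `ℝ≥0∞`, where
they can be exchanged freely and where finiteness of `tr x` transfers to `tr Ψ(x)`.
Finally `Vₒ* Uₗ` is `1` for `o = l` and `0` otherwise, so `Ψ(Φ z) = (Σ wₗ) z = z`.
-/

open scoped InnerProductSpace

namespace HilbertBasis

variable {𝕜 E F ι κ : Type*} [RCLike 𝕜] [NormedAddCommGroup E] [InnerProductSpace 𝕜 E]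
  [NormedAddCommGroup F] [InnerProductSpace 𝕜 F]

theorem hasSum_norm_inner_sq (b : HilbertBasis ι 𝕜 E) (x : E) :
    HasSum (fun i => ‖⟪b i, x⟫_𝕜‖ ^ 2) (‖x‖ ^ 2) := by
  simpa [← b.repr_apply_apply] using lp.hasSum_norm (p := 2) (by norm_num) (b.repr x)

theorem tsum_enorm_inner_sq (b : HilbertBasis ι 𝕜 E) (x : E) :
    ∑' i, ‖⟪b i, x⟫_𝕜‖ₑ ^ 2 = ‖x‖ₑ ^ 2 := by
  simp_rw [← ofReal_norm, ← ENNReal.ofReal_pow (norm_nonneg _)]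
  rw [← ENNReal.ofReal_tsum_of_nonneg (fun _ => by positivity) (b.hasSum_norm_inner_sq x).summable,
    (b.hasSum_norm_inner_sq x).tsum_eq]

theorem tsum_enorm_adjoint_apply_sq [CompleteSpace E] [CompleteSpace F]
    (b : HilbertBasis ι 𝕜 E) (b' : HilbertBasis κ 𝕜 F) (T : E →L[𝕜] F) :
    ∑' j, ‖adjoint T (b' j)‖ₑ ^ 2 = ∑' i, ‖T (b i)‖ₑ ^ 2 := by
  simp_rw [← b.tsum_enorm_inner_sq, ← b'.tsum_enorm_inner_sq, adjoint_inner_right,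
    ← inner_conj_symm (T _), RCLike.enorm_conj]
  exact ENNReal.tsum_comm

end HilbertBasis

namespace ContinuousLinearMap

section SumAdjointConj

variable {𝕜 E ι κ : Type*} [RCLike 𝕜] [NormedAddCommGroup E] [InnerProductSpace 𝕜 E]
  [CompleteSpace E] [Fintype κ]

noncomputable def sumAdjointConj (V : κ → E →L[𝕜] E) (z : E →L[𝕜] E) : E →L[𝕜] E :=
  ∑ j, adjoint (V j) ∘L z ∘L V j

theorem IsPositive.sumAdjointConj {z : E →L[𝕜] E} (hz : z.IsPositive) (V : κ → E →L[𝕜] E) :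
    (sumAdjointConj V z).IsPositive :=
  isPositive_sum _ fun j _ => hz.adjoint_conj (V j)

theorem sumAdjointConj_sub (V : κ → E →L[𝕜] E) (p q : E →L[𝕜] E) :
    sumAdjointConj V (p - q) = sumAdjointConj V p - sumAdjointConj V q := by
  simp only [sumAdjointConj, sub_comp, comp_sub, Finset.sum_sub_distrib]

theorem sumAdjointConj_adjoint_comp_self (V : κ → E →L[𝕜] E) (S : E →L[𝕜] E) :
    sumAdjointConj V (adjoint S ∘L S) = ∑ j, adjoint (S ∘L V j) ∘L (S ∘L V j) := by
  simp only [sumAdjointConj, adjoint_comp, comp_assoc]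

theorem ofReal_re_inner_adjoint_comp_self_apply (S : E →L[𝕜] E) (v : E) :
    ENNReal.ofReal (RCLike.re ⟪(adjoint S ∘L S) v, v⟫_𝕜) = ‖S v‖ₑ ^ 2 := by
  rw [← apply_norm_sq_eq_inner_adjoint_left, ENNReal.ofReal_pow (norm_nonneg _), ofReal_norm]

theorem ofReal_re_inner_sum_adjoint_comp_self_apply (A : κ → E →L[𝕜] E) (v : E) :
    ENNReal.ofReal (RCLike.re ⟪(∑ j, adjoint (A j) ∘L A j) v, v⟫_𝕜) = ∑ j, ‖A j v‖ₑ ^ 2 := by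
  simp only [sum_apply, sum_inner, map_sum, ← apply_norm_sq_eq_inner_adjoint_left]
  rw [ENNReal.ofReal_sum_of_nonneg fun _ _ => by positivity]
  simp_rw [ENNReal.ofReal_pow (norm_nonneg _), ofReal_norm]

variable {V : κ → E →L[𝕜] E}

theorem sum_enorm_adjoint_apply_sq (hV : ∑ j, V j ∘L adjoint (V j) = 1) (v : E) :
    ∑ j, ‖adjoint (V j) v‖ₑ ^ 2 = ‖v‖ₑ ^ 2 := by
  have := ofReal_re_inner_sum_adjoint_comp_self_apply (fun j => adjoint (V j)) v
  simp only [adjoint_adjoint, hV] at this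
  rw [← this, one_apply_eq_self, inner_self_eq_norm_sq, ENNReal.ofReal_pow (norm_nonneg _),
    ofReal_norm]

theorem tsum_ofReal_re_inner_sumAdjointConj (hV : ∑ j, V j ∘L adjoint (V j) = 1)
    (b : HilbertBasis ι 𝕜 E) (S : E →L[𝕜] E) :
    ∑' i, ENNReal.ofReal (RCLike.re ⟪sumAdjointConj V (adjoint S ∘L S) (b i), b i⟫_𝕜)
      = ∑' i, ENNReal.ofReal (RCLike.re ⟪(adjoint S ∘L S) (b i), b i⟫_𝕜) := calc
  _ = ∑' i, ∑ j, ‖(S ∘L V j) (b i)‖ₑ ^ 2 := by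
    simp_rw [sumAdjointConj_adjoint_comp_self, ofReal_re_inner_sum_adjoint_comp_self_apply]
  _ = ∑ j, ∑' i, ‖adjoint (S ∘L V j) (b i)‖ₑ ^ 2 := by
    rw [Summable.tsum_finsetSum fun _ _ => ENNReal.summable]
    simp_rw [b.tsum_enorm_adjoint_apply_sq b]
  _ = ∑' i, ∑ j, ‖adjoint (V j) (adjoint S (b i))‖ₑ ^ 2 := by
    rw [Summable.tsum_finsetSum fun _ _ => ENNReal.summable]
    simp only [adjoint_comp, comp_apply]
  _ = ∑' i, ‖S (b i)‖ₑ ^ 2 := by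
    simp_rw [sum_enorm_adjoint_apply_sq hV, b.tsum_enorm_adjoint_apply_sq b]
  _ = _ := by simp_rw [ofReal_re_inner_adjoint_comp_self_apply]

end SumAdjointConj

variable {𝕜 E F κ : Type*} [RCLike 𝕜] [NormedAddCommGroup E] [InnerProductSpace 𝕜 E]
  [CompleteSpace E] [NormedAddCommGroup F] [InnerProductSpace 𝕜 F] [CompleteSpace F]

theorem adjoint_comp_eq_zero_of_inner_eq_zero {A B : E →L[𝕜] F}
    (h : ∀ x y, ⟪B x, A y⟫_𝕜 = 0) : adjoint B ∘L A = 0 := by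
  ext y
  refine ext_inner_left 𝕜 fun x => ?_
  simp [adjoint_inner_right, h]

theorem adjoint_comp_eq_ite_of_inner_eq_zero [DecidableEq κ] {U : κ → E →L[𝕜] F}
    (hU : ∀ k, adjoint (U k) ∘L U k = 1)
    (horth : ∀ k l, k ≠ l → ∀ x y, ⟪U k x, U l y⟫_𝕜 = 0) (k l : κ) :
    adjoint (U k) ∘L U l = if k = l then 1 else 0 := by
  split_ifs with hkl
  · exact hkl ▸ hU k
  · exact adjoint_comp_eq_zero_of_inner_eq_zero (horth k l hkl)

theorem sum_comp_adjoint_eq_one [Fintype κ] {V : κ → F →L[𝕜] F}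
    (hV : ∀ j, V j ∘L adjoint (V j) ∘L V j = V j)
    (horth : ∀ i j, i ≠ j → adjoint (V i) ∘L V j = 0)
    (hspan : ⨆ j, LinearMap.range (V j : F →ₗ[𝕜] F) = ⊤) : ∑ j, V j ∘L adjoint (V j) = 1 := by
  classical
  refine coe_inj.mp (LinearMap.ext_on (s := ⋃ j, LinearMap.range (V j : F →ₗ[𝕜] F)) ?_ ?_)
  · simpa only [Submodule.span_iUnion, Submodule.span_eq] using hspan
  · rintro _ ⟨_, ⟨j, rfl⟩, y, rfl⟩
    have hsingle : ∀ i, V i (adjoint (V i) (V j y)) = if i = j then V j y else 0 := by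
      intro i
      split_ifs with hij
      · subst hij; exact congr($(hV i) y)
      · simpa using congr(V i ($(horth i j hij) y))
    change (∑ i, V i ∘L adjoint (V i)) (V j y) = V j y
    simp [hsingle]

theorem sum_optionElim_comp_adjoint_eq_one [Fintype κ] [DecidableEq κ] {P0 : F →L[𝕜] F}
    {U : κ → F →L[𝕜] F} (hP0 : IsStarProjection P0)
    (hU : ∀ k l, adjoint (U k) ∘L U l = if k = l then 1 else 0)
    (hP0U : ∀ k, adjoint P0 ∘L U k = 0)
    (hspan : LinearMap.range (P0 : F →ₗ[𝕜] F) ⊔ ⨆ k, LinearMap.range (U k : F →ₗ[𝕜] F) = ⊤) :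
    ∑ o, Option.elim o P0 U ∘L adjoint (Option.elim o P0 U) = 1 := by
  have hP0adj : adjoint P0 = P0 := hP0.isSelfAdjoint.adjoint_eq
  refine sum_comp_adjoint_eq_one ?_ ?_ (by simpa only [iSup_option, Option.elim] using hspan)
  · rintro (_ | k)
    · change P0 * (adjoint P0 * P0) = P0
      rw [hP0adj, hP0.isIdempotentElem.eq, hP0.isIdempotentElem.eq]
    · change U k ∘L (adjoint (U k) ∘L U k) = U k
      rw [hU, if_pos rfl, one_def, comp_id]
  · rintro (_ | k) (_ | l) h
    · exact absurd rfl h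
    · exact hP0U l
    · simpa only [Option.elim, adjoint_comp, adjoint_adjoint, map_zero, hP0adj] using
        congr(adjoint $(hP0U k))
    · exact (hU k l).trans (if_neg (by simpa using h))

theorem sum_adjoint_conj_add_conj_eq_sumAdjointConj_optionElim [Fintype κ] {P0 : F →L[𝕜] F}
    {U P : κ → F →L[𝕜] F} (hP0 : IsSelfAdjoint P0) (hU : ∀ k, adjoint (U k) ∘L U k = 1)
    (hP : ∀ k, P k = U k ∘L adjoint (U k)) (z : F →L[𝕜] F) :
    (∑ k, adjoint (U k) ∘L (P k ∘L z ∘L P k) ∘L U k) + P0 ∘L z ∘L P0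
      = sumAdjointConj (fun o => Option.elim o P0 U) z := by
  have hUmul : ∀ k, adjoint (U k) * U k = 1 := hU
  have hcancel : ∀ k (X : F →L[𝕜] F), adjoint (U k) * (U k * X) = X := fun k X => by
    rw [← mul_assoc, hUmul, one_mul]
  simp only [sumAdjointConj, Fintype.sum_option, Option.elim, hP0.adjoint_eq, hP, ← mul_def,
    mul_assoc, hcancel, hUmul, mul_one, add_comm]

section Complex

variable {H : Type*} [NormedAddCommGroup H] [InnerProductSpace ℂ H] [CompleteSpace H]

theorem sum_adjoint_comp_sum_smul_conj_comp [Fintype κ] [DecidableEq κ] {U : κ → H →L[ℂ] H}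
    (hU : ∀ k l, adjoint (U k) ∘L U l = if k = l then 1 else 0) (w : κ → ℝ) (z : H →L[ℂ] H) :
    ∑ k, adjoint (U k) ∘L (∑ l, w l • (U l ∘L z ∘L adjoint (U l))) ∘L U k = (∑ k, w k) • z := by
  have hterm : ∀ k l, adjoint (U k) ∘L (U l ∘L z ∘L adjoint (U l)) ∘L U k
      = if k = l then z else 0 := by
    intro k l
    calc _ = (adjoint (U k) ∘L U l) ∘L z ∘L (adjoint (U l) ∘L U k) := by simp only [comp_assoc]
      _ = _ := by rw [hU, hU]; split_ifs <;> simp_all [one_def, id_comp, comp_id]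
  simp only [finsetSum_comp, comp_finsetSum, smul_comp, comp_smul, hterm, smul_ite, smul_zero,
    Finset.sum_ite_eq, Finset.mem_univ, if_true, Finset.sum_smul]

theorem sumAdjointConj_optionElim_sum_smul_conj [Fintype κ] [DecidableEq κ] {P0 : H →L[ℂ] H}
    {U : κ → H →L[ℂ] H} (hU : ∀ k l, adjoint (U k) ∘L U l = if k = l then 1 else 0)
    (hP0U : ∀ k, adjoint P0 ∘L U k = 0) (w : κ → ℝ) (z : H →L[ℂ] H) :
    sumAdjointConj (fun o => Option.elim o P0 U) (∑ l, w l • (U l ∘L z ∘L adjoint (U l)))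
      = (∑ k, w k) • z := by
  have hP0 : adjoint P0 ∘L (∑ l, w l • (U l ∘L z ∘L adjoint (U l))) ∘L P0 = 0 := by
    simp only [finsetSum_comp, comp_finsetSum, smul_comp, comp_smul, ← comp_assoc, hP0U,
      zero_comp, smul_zero, Finset.sum_const_zero]
  simp only [sumAdjointConj, Fintype.sum_option, Option.elim, hP0, zero_add,
    sum_adjoint_comp_sum_smul_conj_comp hU]

end Complex

end ContinuousLinearMap

theorem summable_and_tsum_eq_of_tsum_ofReal_eq {ι : Type*} {f g : ι → ℝ} (hf : ∀ i, 0 ≤ f i)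
    (hg : ∀ i, 0 ≤ g i) (hgs : Summable g)
    (h : ∑' i, ENNReal.ofReal (f i) = ∑' i, ENNReal.ofReal (g i)) :
    Summable f ∧ ∑' i, f i = ∑' i, g i := by
  have hfs : Summable f := (ENNReal.summable_toReal (h ▸ hgs.tsum_ofReal_ne_top)).congr
    fun i => ENNReal.toReal_ofReal (hf i)
  refine ⟨hfs, ?_⟩
  rwa [← ENNReal.ofReal_tsum_of_nonneg hf hfs, ← ENNReal.ofReal_tsum_of_nonneg hg hgs,
    ENNReal.ofReal_eq_ofReal_iff (tsum_nonneg hf) (tsum_nonneg hg)] at h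

theorem ContinuousLinearMap.IsPositive.exists_eq_adjoint_comp_self {H : Type*}
    [NormedAddCommGroup H] [InnerProductSpace ℂ H] [CompleteSpace H] {x : H →L[ℂ] H}
    (hx : x.IsPositive) : ∃ S : H →L[ℂ] H, x = adjoint S ∘L S :=
  CStarAlgebra.nonneg_iff_eq_star_mul_self.mp ((nonneg_iff_isPositive x).mpr hx)

theorem trC_sub {H ι : Type*} [NormedAddCommGroup H] [InnerProductSpace ℂ H]
    {b : HilbertBasis ι ℂ H} {p q : H →L[ℂ] H} (hp : Summable fun i => (⟪p (b i), b i⟫).re)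
    (hq : Summable fun i => (⟪q (b i), b i⟫).re) : trC b (p - q) = trC b p - trC b q := by
  simp only [trC, sub_apply, inner_sub_left, Complex.sub_re]
  exact hp.tsum_sub hq

section TraceClass

variable {H ι κ : Type*} [NormedAddCommGroup H] [InnerProductSpace ℂ H] [CompleteSpace H]
  [Fintype κ] {b : HilbertBasis ι ℂ H} {V : κ → H →L[ℂ] H}

theorem isTCPos_sumAdjointConj_and_trC_eq (hV : ∑ j, V j ∘L adjoint (V j) = 1) {x : H →L[ℂ] H}
    (hx : IsTCPos b x) : IsTCPos b (sumAdjointConj V x) ∧ trC b (sumAdjointConj V x) = trC b x := by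
  obtain ⟨hpos, hsum⟩ := hx
  obtain ⟨S, rfl⟩ := hpos.exists_eq_adjoint_comp_self
  have hΨ := hpos.sumAdjointConj V
  obtain ⟨hΨsum, htr⟩ := summable_and_tsum_eq_of_tsum_ofReal_eq
    (fun i => hΨ.re_inner_nonneg_left (b i)) (fun i => hpos.re_inner_nonneg_left (b i)) hsum
    (tsum_ofReal_re_inner_sumAdjointConj hV b S)
  exact ⟨⟨hΨ, hΨsum⟩, htr⟩

theorem trC_sumAdjointConj (hV : ∑ j, V j ∘L adjoint (V j) = 1) {z : H →L[ℂ] H}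
    (hz : IsTraceClassSA b z) : trC b (sumAdjointConj V z) = trC b z := by
  obtain ⟨p, q, hp, hq, rfl, -⟩ := hz
  obtain ⟨⟨-, hΨp⟩, htrp⟩ := isTCPos_sumAdjointConj_and_trC_eq hV hp
  obtain ⟨⟨-, hΨq⟩, htrq⟩ := isTCPos_sumAdjointConj_and_trC_eq hV hq
  rw [sumAdjointConj_sub, trC_sub hΨp hΨq, trC_sub hp.2 hq.2, htrp, htrq]

end TraceClass

theorem reversal_of_sum_of_isometric_conjugations_general
    {H ι : Type*} [NormedAddCommGroup H] [InnerProductSpace ℂ H] [CompleteSpace H]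
    (b : HilbertBasis ι ℂ H)
    (n : ℕ)
    (H0 : Submodule ℂ H) [CompleteSpace H0] (Hk : Fin n → Submodule ℂ H)
    (horth : ∀ i j, i ≠ j → ∀ x ∈ Hk i, ∀ y ∈ Hk j, ⟪x, y⟫ = 0)
    (horth0 : ∀ i, ∀ x ∈ H0, ∀ y ∈ Hk i, ⟪x, y⟫ = 0)
    (hspan : H0 ⊔ (⨆ i, Hk i) = ⊤)
    (U : Fin n → (H →L[ℂ] H))
    (hU : ∀ k, adjoint (U k) ∘L U k = 1)
    (hUrange : ∀ k, LinearMap.range (U k : H →ₗ[ℂ] H) = Hk k)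
    (w : Fin n → ℝ) (hw1 : ∑ k, w k = 1)
    -- `P₀` is the orthogonal projection onto `H₀`, `Pₖ = Uₖ Uₖ*` that onto `Hₖ`
    (P0 : H →L[ℂ] H) (hP0 : P0 = H0.subtypeL ∘L H0.orthogonalProjectionOnto)
    (P : Fin n → (H →L[ℂ] H)) (hP : ∀ k, P k = U k ∘L adjoint (U k)) :
    (∀ z : H →L[ℂ] H, z.IsPositive →
      ((∑ k, adjoint (U k) ∘L (P k ∘L z ∘L P k) ∘L U k) + P0 ∘L z ∘L P0).IsPositive) ∧
    (∀ z : H →L[ℂ] H, IsTraceClassSA b z →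
      trC b ((∑ k, adjoint (U k) ∘L (P k ∘L z ∘L P k) ∘L U k) + P0 ∘L z ∘L P0)
        = trC b z) ∧
    (∀ z : H →L[ℂ] H, IsTraceClassSA b z →
      (∑ k, adjoint (U k) ∘L
          (P k ∘L (∑ l, w l • (U l ∘L z ∘L adjoint (U l))) ∘L P k) ∘L U k)
        + P0 ∘L (∑ l, w l • (U l ∘L z ∘L adjoint (U l))) ∘L P0 = z) := by
  change P0 = H0.starProjection at hP0
  have hmem : ∀ k y, U k y ∈ Hk k := fun k y => hUrange k ▸ LinearMap.mem_range_self _ y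
  have hP0U : ∀ k, adjoint P0 ∘L U k = 0 := fun k => adjoint_comp_eq_zero_of_inner_eq_zero
    fun x y => horth0 k _ (hP0 ▸ H0.starProjection_apply_mem x) _ (hmem k y)
  have hUU := adjoint_comp_eq_ite_of_inner_eq_zero hU
    fun k l hkl x y => horth k l hkl _ (hmem k x) _ (hmem l y)
  have hV := sum_optionElim_comp_adjoint_eq_one (hP0 ▸ isStarProjection_starProjection) hUU hP0U
    (by simpa only [hP0, Submodule.range_starProjection, hUrange] using hspan)
  have hΨ := sum_adjoint_conj_add_conj_eq_sumAdjointConj_optionElim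
    (hP0 ▸ isSelfAdjoint_starProjection H0) hU hP
  refine ⟨fun z hz => hΨ z ▸ hz.sumAdjointConj _, fun z hz => hΨ z ▸ trC_sumAdjointConj hV hz,
    fun z _ => ?_⟩
  rw [hΨ, sumAdjointConj_optionElim_sum_smul_conj hUU hP0U, hw1, one_smul]

/-- With `H = H₀ ⊕ H₁ ⊕ ⋯ ⊕ Hₙ`, `Uₖ : H → Hₖ` isometries,
`Pₖ = Uₖ Uₖ*` and `P₀` the orthogonal projection onto `H₀`, and
`Φ(z) = Σₖ wₖ Uₖ z Uₖ*` (`wₖ ≥ 0`, `Σ wₖ = 1`), the map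
`Ψ(z) := Σₖ Uₖ* Pₖ z Pₖ Uₖ + P₀ z P₀` is a stochastic map (positive and
trace-preserving) with `Ψ(Φ(z)) = z` for every self-adjoint trace class `z`;
hence `Φ` is reversible by a stochastic map. -/
theorem reversal_of_sum_of_isometric_conjugations
    {H ι : Type*} [NormedAddCommGroup H] [InnerProductSpace ℂ H] [CompleteSpace H]
    (b : HilbertBasis ι ℂ H)
    (n : ℕ) (hn : 2 ≤ n)
    (H0 : Submodule ℂ H) [CompleteSpace H0] (Hk : Fin n → Submodule ℂ H)
    (horth : ∀ i j, i ≠ j → ∀ x ∈ Hk i, ∀ y ∈ Hk j, ⟪x, y⟫ = 0)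
    (horth0 : ∀ i, ∀ x ∈ H0, ∀ y ∈ Hk i, ⟪x, y⟫ = 0)
    (hspan : H0 ⊔ (⨆ i, Hk i) = ⊤)
    (U : Fin n → (H →L[ℂ] H))
    (hU : ∀ k, adjoint (U k) ∘L U k = 1)
    (hUrange : ∀ k, LinearMap.range (U k : H →ₗ[ℂ] H) = Hk k)
    (w : Fin n → ℝ) (hw : ∀ k, 0 ≤ w k) (hw1 : ∑ k, w k = 1)
    -- `P₀` is the orthogonal projection onto `H₀`, `Pₖ = Uₖ Uₖ*` that onto `Hₖ`
    (P0 : H →L[ℂ] H) (hP0 : P0 = H0.subtypeL ∘L H0.orthogonalProjectionOnto)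
    (P : Fin n → (H →L[ℂ] H)) (hP : ∀ k, P k = U k ∘L adjoint (U k)) :
    (∀ z : H →L[ℂ] H, z.IsPositive →
      ((∑ k, adjoint (U k) ∘L (P k ∘L z ∘L P k) ∘L U k) + P0 ∘L z ∘L P0).IsPositive) ∧
    (∀ z : H →L[ℂ] H, IsTraceClassSA b z →
      trC b ((∑ k, adjoint (U k) ∘L (P k ∘L z ∘L P k) ∘L U k) + P0 ∘L z ∘L P0)
        = trC b z) ∧
    (∀ z : H →L[ℂ] H, IsTraceClassSA b z →
      (∑ k, adjoint (U k) ∘L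
          (P k ∘L (∑ l, w l • (U l ∘L z ∘L adjoint (U l))) ∘L P k) ∘L U k)
        + P0 ∘L (∑ l, w l • (U l ∘L z ∘L adjoint (U l))) ∘L P0 = z) :=
  reversal_of_sum_of_isometric_conjugations_general b n H0 Hk horth horth0 hspan U hU hUrange w hw1
    P0 hP0 P hP
end

section
/- In a base norm space V with strictly positive charge functional e, let x, y be states (elements of the base K, i.e. positive with e = 1). If x ⊥₁ y, meaning ‖αx − βy‖₁ = α + β for all α, β ≥ 0, then for any stochastic isometry Φ, Φx ⊥₁ Φy; and conversely if a stochastic map Φ satisfies Φx ⊥₁ Φy for all orthogonal pairs x ⊥₁ y in V⁺, then ‖Φz‖₁ = ‖z‖₁ for all z. -/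
/-- In a base norm space with strictly positive charge functional
`e`, if `x, y` are states with `x ⊥₁ y` (i.e. `‖αx - βy‖₁ = α + β` for all
`α, β ≥ 0`), then for any stochastic isometry `Φ`, `Φx ⊥₁ Φy`; and conversely, if a
stochastic map `Φ` preserves orthogonality of positive elements, then
`‖Φz‖₁ = ‖z‖₁` for all `z`. -/
theorem stochastic_isometry_orthogonality
    {V : Type*} [NormedAddCommGroup V] [NormedSpace ℝ V]
    (C : Set V) (e : V →ₗ[ℝ] ℝ)
    -- the norm is the base norm associated with the cone `C` and the charge `e`
    (hnorm : ∀ z : V, ‖z‖ =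
      sInf {r : ℝ | ∃ p ∈ C, ∃ q ∈ C, z = p - q ∧ r = e p + e q})
    -- every element has a minimal decomposition
    (hmin : ∀ z : V, ∃ p ∈ C, ∃ q ∈ C, z = p - q ∧ ‖z‖ = e p + e q)
    -- `e` is strictly positive on the cone
    (hstrict : ∀ x ∈ C, 0 ≤ e x ∧ (e x = 0 → x = 0))
    -- `Φ` is a stochastic map
    (Φ : V →ₗ[ℝ] V)
    (hpos : ∀ x ∈ C, Φ x ∈ C)
    (hcharge : ∀ z : V, e (Φ z) = e z) :
    -- a stochastic isometry preserves orthogonality of states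
    ((∀ z : V, ‖Φ z‖ = ‖z‖) →
      ∀ x ∈ C, ∀ y ∈ C, e x = 1 → e y = 1 →
        (∀ α β : ℝ, 0 ≤ α → 0 ≤ β → ‖α • x - β • y‖ = α + β) →
        (∀ α β : ℝ, 0 ≤ α → 0 ≤ β → ‖α • Φ x - β • Φ y‖ = α + β)) ∧
    -- conversely, an orthogonality-preserving stochastic map is an isometry
    ((∀ x ∈ C, ∀ y ∈ C,
        (∀ α β : ℝ, 0 ≤ α → 0 ≤ β → ‖α • x - β • y‖ = α * e x + β * e y) →
        (∀ α β : ℝ, 0 ≤ α → 0 ≤ β →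
          ‖α • Φ x - β • Φ y‖ = α * e (Φ x) + β * e (Φ y))) →
      ∀ z : V, ‖Φ z‖ = ‖z‖) := by
  constructor
  · intro hiso x hx y hy hex hey horth α β hα hβ
    have : α • Φ x - β • Φ y = Φ (α • x - β • y) := by
      simp [map_sub, map_smul]
    rw [this, hiso]
    exact horth α β hα hβ
  · intro horth z
    -- basic facts
    have hbdd : ∀ w : V,
        BddBelow {r : ℝ | ∃ p ∈ C, ∃ q ∈ C, w = p - q ∧ r = e p + e q} := by
      intro w
      refine ⟨0, ?_⟩
      rintro r ⟨p, hp, q, hq, -, rfl⟩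
      have h1 := (hstrict p hp).1
      have h2 := (hstrict q hq).1
      linarith
    have hle : ∀ w : V, ∀ p ∈ C, ∀ q ∈ C, w = p - q → ‖w‖ ≤ e p + e q := by
      intro w p hp q hq hw
      rw [hnorm w]
      exact csInf_le (hbdd w) ⟨p, hp, q, hq, hw, rfl⟩
    have habs : ∀ w : V, |e w| ≤ ‖w‖ := by
      intro w
      obtain ⟨p, hp, q, hq, hw, hmw⟩ := hmin w
      rw [hmw, hw, map_sub]
      have h1 := (hstrict p hp).1
      have h2 := (hstrict q hq).1
      rw [abs_le]
      constructor <;> linarith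
    have h0 : (0 : V) ∈ C := by
      obtain ⟨p, hp, q, hq, hpq, hm⟩ := hmin 0
      have hsum : e p + e q = 0 := by rw [← hm]; simp
      have h1 := (hstrict p hp).1
      have h2 := (hstrict q hq).1
      have hp0 : e p = 0 := by linarith
      have := (hstrict p hp).2 hp0
      rwa [← this]
    have hnc : ∀ p ∈ C, ‖p‖ = e p := by
      intro p hp
      have h1 : ‖p‖ ≤ e p := by
        have := hle p p hp 0 h0 (by simp)
        simpa using this
      have h2 := habs p
      rw [abs_of_nonneg (hstrict p hp).1] at h2
      linarith
    obtain ⟨p, hp, q, hq, hz, hm⟩ := hmin z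
    have key : ∀ α β : ℝ, 0 ≤ α → 0 ≤ β → ‖α • p - β • q‖ = α * e p + β * e q := by
      intro α β hα hβ
      have hub : ‖α • p - β • q‖ ≤ α * e p + β * e q := by
        calc ‖α • p - β • q‖ ≤ ‖α • p‖ + ‖β • q‖ := norm_sub_le _ _
          _ = α * e p + β * e q := by
              rw [norm_smul, norm_smul, Real.norm_eq_abs, Real.norm_eq_abs,
                abs_of_nonneg hα, abs_of_nonneg hβ, hnc p hp, hnc q hq]
      have hlb : α * e p + β * e q ≤ ‖α • p - β • q‖ := by
        rcases le_total α β with h | h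
        · have heq : β • (p - q) = (α • p - β • q) + (β - α) • p := by module
          have h1 : ‖β • (p - q)‖ ≤ ‖α • p - β • q‖ + ‖(β - α) • p‖ := by
            rw [heq]; exact norm_add_le _ _
          rw [norm_smul, norm_smul, Real.norm_eq_abs, Real.norm_eq_abs,
            abs_of_nonneg hβ, abs_of_nonneg (by linarith : (0:ℝ) ≤ β - α),
            ← hz, hm, hnc p hp] at h1
          nlinarith
        · have heq : α • (p - q) = (α • p - β • q) - (α - β) • q := by module
          have h1 : ‖α • (p - q)‖ ≤ ‖α • p - β • q‖ + ‖(α - β) • q‖ := by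
            rw [heq]; exact norm_sub_le _ _
          rw [norm_smul, norm_smul, Real.norm_eq_abs, Real.norm_eq_abs,
            abs_of_nonneg hα, abs_of_nonneg (by linarith : (0:ℝ) ≤ α - β),
            ← hz, hm, hnc q hq] at h1
          nlinarith
      linarith
    have hfin := horth p hp q hq key 1 1 zero_le_one zero_le_one
    simp only [one_smul, one_mul, hcharge] at hfin
    rw [hz, map_sub, hfin, ← hz]
    exact hm.symm
end
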